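/- Let ρ^{p₁…p_{2N}} = ⊗_{i=1}^{N} ρ^{p_{2i−1},p_{2i}} be a tensor product of N two-qubit states and M = ⊗_{j=1}^{N−1} M^{p_{2j},p_{2j+1}} a tensor product of N−1 bipartite POVM elements acting on adjacent pairs. Then the unnormalized post-measurement reduced state of qubits p₁ and p_{2N}, Tr_{p₂…p_{2N−1}}[ρ (𝟙^{p₁} ⊗ M ⊗ 𝟙^{p_{2N}})], equals (1/4) Σ_{k,l} [∏_{i=1}^{N} R^{p_{2i−1},p_{2i}} 𝔯^{p_{2i},p_{2i+1}}]_{kl} σ_k ⊗ σ_l, where 𝔯^{p_{2N},p_{2N+1}} := 𝟙₄ by convention. -/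

import Mathlib

open Matrix Kronecker ComplexOrder

/-!
Realign each two-qubit operator so that its row index is a bond on the left and its column index
a bond on the right (`realign`). The partial trace of `ρ (𝟙 ⊗ M ⊗ 𝟙)` then contracts a chain of
bonds, i.e. it is the matrix product `W = ρ̃₁ M̃₁ ρ̃₂ ⋯ M̃_{N-1} ρ̃_N` read at the end indices.
On the Bloch side `R = U ρ̃ V` and `𝔯 = ¼ U M̃ V`, where `U` and `V` list the entries of the
Pauli matrices; completeness and orthogonality of the Pauli basis give `V U = U V = 2`, so
`X ↦ ½ U X V` is multiplicative and `∏ Rᵢ 𝔯ᵢ = U W V`. The Pauli expansion of the reduced state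
turns `U W V` back into it.
-/

/-- Pauli matrices, with `σ 0 = I`. -/
noncomputable def σ : Fin 4 → Matrix (Fin 2) (Fin 2) ℂ :=
  ![1, !![0, 1; 1, 0], !![0, -Complex.I; Complex.I, 0], !![1, 0; 0, -1]]

/-- For `T` acting on `A ⊗ B`: the row index of `realign T` is (column, row) of `A`, its column
index is (row, column) of `B`. -/
def realign {α β γ δ R : Type*} (T : Matrix (α × β) (γ × δ) R) : Matrix (γ × α) (β × δ) R :=
  of fun x y => T (x.2, y.1) (x.1, y.2)

section PathSum

variable {α R : Type*} [Fintype α] [DecidableEq α] [CommSemiring R]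

theorem Fintype.sum_fin_succ_pi {β M : Type*} [Fintype β] [AddCommMonoid M] {n : ℕ}
    (f : (Fin (n + 1) → β) → M) :
    ∑ g, f g = ∑ b, ∑ g : Fin n → β, f (Fin.cons b g) := by
  rw [← (Fin.consEquiv fun _ => β).sum_comp, Fintype.sum_prod_type]
  rfl

theorem sum_alternating_paths_eq_dotProduct (n : ℕ) (A : Fin (n + 1) → Matrix α α R)
    (B : Fin n → Matrix α α R) (u f : α → R) :
    ∑ t : Fin (n + 1) → α × α, u (t 0).1 * (∏ i, A i (t i).1 (t i).2) *
        (∏ j : Fin n, B j (t j.castSucc).2 (t j.succ).1) * f (t (Fin.last n)).2 =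
      u ⬝ᵥ ((List.ofFn fun j => A j.castSucc * B j).prod * A (Fin.last n)) *ᵥ f := by
  induction n generalizing u with
  | zero =>
    rw [← (Equiv.funUnique (Fin 1) (α × α)).symm.sum_comp, Fintype.sum_prod_type]
    simp [dotProduct, mulVec, Finset.mul_sum, mul_assoc]
  | succ n ih =>
    have step := ih (fun i => A i.succ) (fun j => B j.succ) (u ᵥ* (A 0 * B 0))
    simp only [Fin.succ_last, Fin.succ_castSucc] at step
    rw [List.ofFn_succ, List.prod_cons, Matrix.mul_assoc, ← mulVec_mulVec, dotProduct_mulVec,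
      Fin.castSucc_zero]
    refine Eq.trans ?_ step
    rw [Fintype.sum_fin_succ_pi, Finset.sum_comm]
    refine Finset.sum_congr rfl fun t _ => ?_
    simp only [Fin.prod_univ_succ, Fin.cons_zero, Fin.cons_succ, ← Fin.succ_last,
      Fin.castSucc_zero, ← Fin.succ_castSucc]
    simp only [vecMul, dotProduct, mul_apply, Fintype.sum_prod_type, Finset.sum_mul,
      Finset.mul_sum]
    refine Finset.sum_congr rfl fun a _ => Finset.sum_congr rfl fun b _ => ?_
    ring

end PathSum

theorem sum_pauli_mul_pauli (a b c d : Fin 2) :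
    ∑ k, σ k a b * σ k c d = if a = d ∧ b = c then 2 else 0 := by
  fin_cases a <;> fin_cases b <;> fin_cases c <;> fin_cases d <;>
    simp [σ, Fin.sum_univ_four] <;> ring_nf

theorem pauli_expansion (Y : Matrix (Fin 2 × Fin 2) (Fin 2 × Fin 2) ℂ) :
    (1 / 4 : ℂ) • ∑ k, ∑ l, (Y * (σ k ⊗ₖ σ l)).trace • (σ k ⊗ₖ σ l) = Y := by
  ext p q
  have hswap : ∑ k, ∑ l, (Y * (σ k ⊗ₖ σ l)).trace * (σ k p.1 q.1 * σ l p.2 q.2) =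
      ∑ x, ∑ y, Y x y *
        ((∑ k, σ k y.1 x.1 * σ k p.1 q.1) * ∑ l, σ l y.2 x.2 * σ l p.2 q.2) := by
    simp only [trace, diag, mul_apply, kroneckerMap_apply, Finset.sum_mul, Finset.mul_sum]
    conv_lhs => enter [2, k]; rw [Finset.sum_comm]
    rw [Finset.sum_comm]
    conv_lhs => enter [2, x, 2, k]; rw [Finset.sum_comm]
    conv_lhs => enter [2, x]; rw [Finset.sum_comm]
    refine Finset.sum_congr rfl fun x _ => Finset.sum_congr rfl fun y _ => ?_
    rw [Finset.sum_comm]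
    exact Finset.sum_congr rfl fun l _ => Finset.sum_congr rfl fun k _ => by ring
  simp only [Matrix.smul_apply, Matrix.sum_apply, kroneckerMap_apply, smul_eq_mul, hswap,
    sum_pauli_mul_pauli, ite_and, mul_ite, ite_mul, zero_mul, mul_zero, Fintype.sum_prod_type,
    Finset.sum_ite_eq', Finset.mem_univ, ↓reduceIte, Finset.sum_ite_irrel, Finset.sum_const_zero]
  ring

noncomputable def pauliRow : Matrix (Fin 4) (Fin 2 × Fin 2) ℂ := of fun k x => σ k x.1 x.2

noncomputable def pauliCol : Matrix (Fin 2 × Fin 2) (Fin 4) ℂ := of fun x l => σ l x.2 x.1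

theorem trace_mul_kronecker_pauli (T : Matrix (Fin 2 × Fin 2) (Fin 2 × Fin 2) ℂ) (k l : Fin 4) :
    (T * (σ k ⊗ₖ σ l)).trace = (pauliRow * realign T * pauliCol) k l := by
  simp only [trace, diag, mul_apply, kroneckerMap_apply, realign, pauliRow, pauliCol, of_apply,
    Fintype.sum_prod_type, Fin.sum_univ_two]
  ring

theorem pauliCol_mul_pauliRow : pauliCol * pauliRow = (2 : ℂ) • 1 := by
  ext ⟨a, b⟩ ⟨c, d⟩
  simp only [mul_apply, pauliCol, pauliRow, of_apply, sum_pauli_mul_pauli, Matrix.smul_apply,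
    one_apply, Prod.mk.injEq, and_comm (a := b = d)]
  split_ifs <;> simp

theorem pauliRow_mul_pauliCol : pauliRow * pauliCol = (2 : ℂ) • 1 := by
  ext k l
  fin_cases k <;> fin_cases l <;>
    simp [mul_apply, pauliRow, pauliCol, σ, Fintype.sum_prod_type, one_apply] <;> ring_nf

noncomputable def blochHom :
    Matrix (Fin 2 × Fin 2) (Fin 2 × Fin 2) ℂ →* Matrix (Fin 4) (Fin 4) ℂ where
  toFun X := (1 / 2 : ℂ) • (pauliRow * X * pauliCol)
  map_one' := by
    rw [Matrix.mul_one, pauliRow_mul_pauliCol, smul_smul]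
    norm_num
  map_mul' X Y := by
    have hmid : pauliRow * X * pauliCol * (pauliRow * Y * pauliCol) =
        (2 : ℂ) • (pauliRow * (X * Y) * pauliCol) := by
      calc pauliRow * X * pauliCol * (pauliRow * Y * pauliCol)
          = pauliRow * X * (pauliCol * pauliRow) * Y * pauliCol := by
            simp only [Matrix.mul_assoc]
        _ = _ := by simp [pauliCol_mul_pauliRow, Matrix.mul_assoc]
    rw [Matrix.smul_mul, Matrix.mul_smul, hmid, smul_smul, smul_smul]
    norm_num

theorem two_smul_blochHom (X : Matrix (Fin 2 × Fin 2) (Fin 2 × Fin 2) ℂ) :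
    (2 : ℂ) • blochHom X = pauliRow * X * pauliCol := by
  simp [blochHom, smul_smul]

section Chain

variable {m : ℕ}

def productState (ρ : Fin (m + 1) → Matrix (Fin 2 × Fin 2) (Fin 2 × Fin 2) ℂ) :
    Matrix (Fin (m + 1) → Fin 2 × Fin 2) (Fin (m + 1) → Fin 2 × Fin 2) ℂ :=
  of fun I J => ∏ i, ρ i (I i) (J i)

def chainMeasurement (M : Fin m → Matrix (Fin 2 × Fin 2) (Fin 2 × Fin 2) ℂ) :
    Matrix (Fin (m + 1) → Fin 2 × Fin 2) (Fin (m + 1) → Fin 2 × Fin 2) ℂ :=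
  of fun I J => (if (I 0).1 = (J 0).1 then 1 else 0) *
    (if (I (Fin.last m)).2 = (J (Fin.last m)).2 then 1 else 0) *
    ∏ j : Fin m, M j ((I j.castSucc).2, (I j.succ).1) ((J j.castSucc).2, (J j.succ).1)

def traceOutInner
    (X : Matrix (Fin (m + 1) → Fin 2 × Fin 2) (Fin (m + 1) → Fin 2 × Fin 2) ℂ) :
    Matrix (Fin 2 × Fin 2) (Fin 2 × Fin 2) ℂ :=
  of fun p q => ∑ I, ∑ J,
    if (I 0).1 = p.1 ∧ (J 0).1 = q.1 ∧ (I (Fin.last m)).2 = p.2 ∧ (J (Fin.last m)).2 = q.2 ∧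
        (∀ i : Fin (m + 1), (i : ℕ) ≠ 0 → (I i).1 = (J i).1) ∧
        (∀ i : Fin (m + 1), (i : ℕ) ≠ m → (I i).2 = (J i).2)
    then X I J else 0

def chainMatrix (ρ : Fin (m + 1) → Matrix (Fin 2 × Fin 2) (Fin 2 × Fin 2) ℂ)
    (M : Fin m → Matrix (Fin 2 × Fin 2) (Fin 2 × Fin 2) ℂ) :
    Matrix (Fin 2 × Fin 2) (Fin 2 × Fin 2) ℂ :=
  (List.ofFn fun j => realign (ρ j.castSucc) * realign (M j)).prod * realign (ρ (Fin.last m))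

def withEnds (I : Fin (m + 1) → Fin 2 × Fin 2) (q : Fin 2 × Fin 2) :
    Fin (m + 1) → Fin 2 × Fin 2 :=
  fun i => (if i = 0 then q.1 else (I i).1, if i = Fin.last m then q.2 else (I i).2)

theorem eq_withEnds_iff (I J : Fin (m + 1) → Fin 2 × Fin 2) (q : Fin 2 × Fin 2) :
    ((J 0).1 = q.1 ∧ (J (Fin.last m)).2 = q.2 ∧
        (∀ i : Fin (m + 1), (i : ℕ) ≠ 0 → (I i).1 = (J i).1) ∧
        (∀ i : Fin (m + 1), (i : ℕ) ≠ m → (I i).2 = (J i).2)) ↔ J = withEnds I q := by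
  have hlast (i : Fin (m + 1)) : (i : ℕ) ≠ m ↔ i ≠ Fin.last m := by simp [Fin.ext_iff]
  simp only [hlast, ne_eq, Fin.val_eq_zero_iff, funext_iff, withEnds, Prod.ext_iff]
  constructor
  · rintro ⟨h0, hl, h1, h2⟩ i
    constructor
    · split_ifs with hi
      · exact hi ▸ h0
      · exact (h1 i hi).symm
    · split_ifs with hi
      · exact hi ▸ hl
      · exact (h2 i hi).symm
  · intro h
    refine ⟨by simpa using (h 0).1, by simpa using (h (Fin.last m)).2,
      fun i hi => ?_, fun i hi => ?_⟩
    · simpa [hi] using ((h i).1).symm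
    · simpa [hi] using ((h i).2).symm

theorem traceOutInner_apply
    (X : Matrix (Fin (m + 1) → Fin 2 × Fin 2) (Fin (m + 1) → Fin 2 × Fin 2) ℂ)
    (p q : Fin 2 × Fin 2) :
    traceOutInner X p q =
      ∑ I, if (I 0).1 = p.1 ∧ (I (Fin.last m)).2 = p.2 then X I (withEnds I q) else 0 := by
  refine Finset.sum_congr rfl fun I _ => ?_
  have hcond (J : Fin (m + 1) → Fin 2 × Fin 2) :
      ((I 0).1 = p.1 ∧ (J 0).1 = q.1 ∧ (I (Fin.last m)).2 = p.2 ∧ (J (Fin.last m)).2 = q.2 ∧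
        (∀ i : Fin (m + 1), (i : ℕ) ≠ 0 → (I i).1 = (J i).1) ∧
        (∀ i : Fin (m + 1), (i : ℕ) ≠ m → (I i).2 = (J i).2)) ↔
      ((I 0).1 = p.1 ∧ (I (Fin.last m)).2 = p.2) ∧ J = withEnds I q := by
    rw [← eq_withEnds_iff]
    tauto
  simp_rw [hcond, ite_and]
  simp

theorem productState_mul_chainMeasurement_apply_withEnds
    (ρ : Fin (m + 1) → Matrix (Fin 2 × Fin 2) (Fin 2 × Fin 2) ℂ)
    (M : Fin m → Matrix (Fin 2 × Fin 2) (Fin 2 × Fin 2) ℂ) (I : Fin (m + 1) → Fin 2 × Fin 2)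
    (q : Fin 2 × Fin 2) :
    (productState ρ * chainMeasurement M) I (withEnds I q) =
      ∑ K : Fin (m + 1) → Fin 2 × Fin 2, (∏ i, ρ i (I i) (K i)) *
        ((if (K 0).1 = q.1 then 1 else 0) * (if (K (Fin.last m)).2 = q.2 then 1 else 0) *
          ∏ j : Fin m, M j ((K j.castSucc).2, (K j.succ).1) ((I j.castSucc).2, (I j.succ).1)) := by
  simp [mul_apply, productState, chainMeasurement, withEnds, Fin.succ_ne_zero,
    Fin.castSucc_ne_last]

/-- The row index `I` and column index `K` of a source, as its left and right bond. -/
def bondEquiv : (Fin 2 × Fin 2) × (Fin 2 × Fin 2) ≃ (Fin 2 × Fin 2) × (Fin 2 × Fin 2) where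
  toFun s := ((s.2.1, s.1.1), (s.1.2, s.2.2))
  invFun t := ((t.1.2, t.2.1), (t.1.1, t.2.2))
  left_inv _ := rfl
  right_inv _ := rfl

theorem traceOutInner_productState_mul_chainMeasurement
    (ρ : Fin (m + 1) → Matrix (Fin 2 × Fin 2) (Fin 2 × Fin 2) ℂ)
    (M : Fin m → Matrix (Fin 2 × Fin 2) (Fin 2 × Fin 2) ℂ) :
    traceOutInner (productState ρ * chainMeasurement M) =
      of fun p q => chainMatrix ρ M (q.1, p.1) (p.2, q.2) := by
  ext p q
  have hentry : chainMatrix ρ M (q.1, p.1) (p.2, q.2) =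
      Pi.single (q.1, p.1) 1 ⬝ᵥ chainMatrix ρ M *ᵥ Pi.single (p.2, q.2) 1 := by
    simp
  rw [traceOutInner_apply, of_apply, hentry, chainMatrix,
    ← sum_alternating_paths_eq_dotProduct m (fun i => realign (ρ i)) (fun j => realign (M j)),
    ← ((Equiv.arrowProdEquivProdArrow _ _ _).symm.trans
      (Equiv.piCongrRight fun _ => bondEquiv)).sum_comp,
    Fintype.sum_prod_type]
  refine Finset.sum_congr rfl fun I _ => ?_
  simp only [productState_mul_chainMeasurement_apply_withEnds, Equiv.trans_apply,
    Equiv.piCongrRight_apply, bondEquiv, Equiv.coe_fn_mk, realign, of_apply]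
  split_ifs with h
  · refine Finset.sum_congr rfl fun K _ => ?_
    simp [Pi.single_apply, h]
  · symm
    refine Finset.sum_eq_zero fun K _ => ?_
    rcases not_and_or.mp h with h | h <;> simp [Pi.single_apply, h]

theorem list_prod_bloch_mul_coeff (ρ : Fin (m + 1) → Matrix (Fin 2 × Fin 2) (Fin 2 × Fin 2) ℂ)
    (M : Fin m → Matrix (Fin 2 × Fin 2) (Fin 2 × Fin 2) ℂ)
    (r : Fin (m + 1) → Matrix (Fin 4) (Fin 4) ℂ)
    (hr : ∀ j : Fin m, r j.castSucc = (1 / 4 : ℂ) • (pauliRow * realign (M j) * pauliCol))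
    (hlast : r (Fin.last m) = 1) :
    (List.ofFn fun i => pauliRow * realign (ρ i) * pauliCol * r i).prod =
      pauliRow * chainMatrix ρ M * pauliCol := by
  have hfactor (j : Fin m) : pauliRow * realign (ρ j.castSucc) * pauliCol * r j.castSucc =
      blochHom (realign (ρ j.castSucc) * realign (M j)) := by
    rw [hr, map_mul, ← two_smul_blochHom, ← two_smul_blochHom]
    simp only [Matrix.smul_mul, Matrix.mul_smul, smul_smul]
    norm_num
  rw [List.ofFn_succ', List.prod_concat, hlast, Matrix.mul_one]
  simp only [hfactor]
  rw [← Function.comp_def blochHom, ← List.map_ofFn, ← map_list_prod, ← two_smul_blochHom,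
    Matrix.mul_smul, ← map_mul, two_smul_blochHom, chainMatrix]

end Chain

open scoped Classical in
/-- Swapping scenario with N two-qubit sources: source `i` holds qubits `(i,0)` and `(i,1)`;
measurement `j` acts on qubits `(j,1)` and `(j+1,0)`. The unnormalized post-measurement
reduced state of the first and last qubits equals
`(1/4) Σ_{k,l} [∏ᵢ R_i 𝔯_i]_{kl} σ_k ⊗ σ_l`, with `𝔯_N := 𝟙` by convention. -/
theorem stmt13 (N : ℕ) (hN : 2 ≤ N)
    (ρs : Fin N → Matrix (Fin 2 × Fin 2) (Fin 2 × Fin 2) ℂ)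
    (Ms : Fin (N - 1) → Matrix (Fin 2 × Fin 2) (Fin 2 × Fin 2) ℂ)
    (Rs : Fin N → Matrix (Fin 4) (Fin 4) ℂ)
    (hRs : ∀ i k l, Rs i k l = (ρs i * (σ k ⊗ₖ σ l)).trace)
    (rs : Fin N → Matrix (Fin 4) (Fin 4) ℂ)
    (hrs : ∀ (i : Fin N) (h : (i : ℕ) < N - 1) (k l : Fin 4),
      rs i k l = (1/4 : ℂ) * (Ms ⟨i, h⟩ * (σ k ⊗ₖ σ l)).trace)
    (hrlast : ∀ i : Fin N, ¬ ((i : ℕ) < N - 1) → rs i = 1) :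
    (Matrix.of fun p q : Fin 2 × Fin 2 =>
      -- partial trace over all qubits except the first, `(0,0)`, and the last, `(N-1,1)`
      ∑ I : Fin N → Fin 2 × Fin 2, ∑ J : Fin N → Fin 2 × Fin 2,
        if (I ⟨0, by omega⟩).1 = p.1 ∧ (J ⟨0, by omega⟩).1 = q.1 ∧
            (I ⟨N - 1, by omega⟩).2 = p.2 ∧ (J ⟨N - 1, by omega⟩).2 = q.2 ∧
            (∀ i : Fin N, (i : ℕ) ≠ 0 → (I i).1 = (J i).1) ∧
            (∀ i : Fin N, (i : ℕ) ≠ N - 1 → (I i).2 = (J i).2)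
        then
          ((Matrix.of fun I' J' : Fin N → Fin 2 × Fin 2 =>
              -- the total state ⊗ᵢ ρ^{p_{2i-1},p_{2i}}
              ∏ i : Fin N, ρs i (I' i) (J' i)) *
            (Matrix.of fun I' J' : Fin N → Fin 2 × Fin 2 =>
              -- 𝟙^{p₁} ⊗ (⊗ⱼ M^{p_{2j},p_{2j+1}}) ⊗ 𝟙^{p_{2N}}
              (if (I' ⟨0, by omega⟩).1 = (J' ⟨0, by omega⟩).1 then 1 else 0) *
              (if (I' ⟨N - 1, by omega⟩).2 = (J' ⟨N - 1, by omega⟩).2 then 1 else 0) *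
              ∏ j : Fin (N - 1),
                Ms j ((I' ⟨j.1, by have := j.isLt; omega⟩).2,
                      (I' ⟨j.1 + 1, by have := j.isLt; omega⟩).1)
                     ((J' ⟨j.1, by have := j.isLt; omega⟩).2,
                      (J' ⟨j.1 + 1, by have := j.isLt; omega⟩).1))) I J
        else 0)
    = (1/4 : ℂ) • ∑ k : Fin 4, ∑ l : Fin 4,
        ((List.ofFn fun i : Fin N => Rs i * rs i).prod) k l • (σ k ⊗ₖ σ l) := by
  obtain ⟨m, rfl⟩ : ∃ m, N = m + 1 := ⟨N - 1, by omega⟩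
  have hR : Rs = fun i => pauliRow * realign (ρs i) * pauliCol := by
    ext i k l
    rw [hRs, trace_mul_kronecker_pauli]
  have hprod :
      (List.ofFn fun i => Rs i * rs i).prod = pauliRow * chainMatrix ρs Ms * pauliCol := by
    subst hR
    refine list_prod_bloch_mul_coeff ρs Ms rs (fun j => ?_) (hrlast _ (by simp))
    ext k l
    rw [hrs j.castSucc (by simp), trace_mul_kronecker_pauli]
    rfl
  show traceOutInner (productState ρs * chainMeasurement (m := m) Ms) = _
  rw [traceOutInner_productState_mul_chainMeasurement, hprod]
  refine (pauli_expansion _).symm.trans ?_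
  simp only [trace_mul_kronecker_pauli]
  -- `realign` undoes the index shuffle `(q.1, p.1) (p.2, q.2)`
  rfl
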